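/- arXiv:1801.03932 — 3 statements merged into one kernel-verified Lean document; each statement's English description precedes it below -/
import Mathlib

section
/- Let 0 < a < ∞ and define the map T_a on radial functions of the unit ball B_1 ⊂ ℝ^n by (T_a u)(x) = a^{(n-1)/n} u(|x|^{1/a}). Then T_a maps W^{1,n}_{0,rad}(B_1) to itself, is invertible with inverse T_{1/a}, and preserves the n-Dirichlet energy: ‖∇(T_a u)‖_{L^n(B_1)} = ‖∇u‖_{L^n(B_1)} for all u ∈ W^{1,n}_{0,rad}(B_1). -/
open MeasureTheory Metric Set Filter
open scoped RealInnerProductSpace ENNReal Topology NNReal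

noncomputable section

abbrev E (n : ℕ) := EuclideanSpace ℝ (Fin n)

/-- The transformation T_a acting on (the radial profile `f` of) a radial function:
(T_a u)(x) = a^{(n-1)/n} · u(|x|^{1/a}). -/
def Ta (n : ℕ) (a : ℝ) (f : ℝ → ℝ) : E n → ℝ :=
  fun x => a ^ (((n : ℝ) - 1) / (n : ℝ)) * f (‖x‖ ^ (1 / a))

section AuxRadial
open InnerProductSpace
lemma hasFDerivAt_norm' {n : ℕ} {x : E n} (hx : x ≠ 0) :
    HasFDerivAt (fun y : E n => ‖y‖) (innerSL ℝ ((‖x‖⁻¹ : ℝ) • x)) x := by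
  have hxn : ‖x‖ ≠ 0 := norm_ne_zero_iff.mpr hx
  have hsq : HasFDerivAt (fun y : E n => ‖y‖ ^ 2) (2 • innerSL ℝ x) x :=
    (hasStrictFDerivAt_norm_sq x).hasFDerivAt
  have hsqrt : HasDerivAt Real.sqrt (1 / (2 * Real.sqrt (‖x‖ ^ 2))) (‖x‖ ^ 2) :=
    Real.hasDerivAt_sqrt (by positivity)
  have h := hsqrt.comp_hasFDerivAt x hsq
  have h2 : (Real.sqrt ∘ fun y : E n => ‖y‖ ^ 2) = fun y : E n => ‖y‖ := by
    funext y; simp [Real.sqrt_sq (norm_nonneg y)]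
  rw [h2] at h
  refine h.congr_fderiv ?_
  ext y
  rw [Real.sqrt_sq (norm_nonneg x)]
  simp only [ContinuousLinearMap.smul_apply, innerSL_apply_apply, smul_eq_mul,
    real_inner_smul_left]
  field_simp
  ring

lemma norm_gradient_radial {n : ℕ} {φ : ℝ → ℝ} {x : E n} (hx : x ≠ 0) {c : ℝ}
    (hφ : HasDerivAt φ c ‖x‖) :
    ‖gradient (fun y : E n => φ ‖y‖) x‖ = |c| := by
  have hxn : ‖x‖ ≠ 0 := norm_ne_zero_iff.mpr hx
  have h : HasFDerivAt (fun y : E n => φ ‖y‖) (c • innerSL ℝ ((‖x‖⁻¹ : ℝ) • x)) x := by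
    have := hφ.comp_hasFDerivAt x (hasFDerivAt_norm' hx)
    simpa [Function.comp_def] using this
  rw [h.hasGradientAt.gradient]
  rw [LinearIsometryEquiv.norm_map]
  rw [norm_smul, innerSL_apply_norm, norm_smul, norm_inv, norm_norm,
    inv_mul_cancel₀ hxn, mul_one, Real.norm_eq_abs]

end AuxRadial

/-- T_a maps W^{1,n}_{0,rad}(B₁) to itself, is invertible with inverse T_{1/a}, and preserves
the n-Dirichlet energy. -/
theorem stmt1 (n : ℕ) (hn : 2 ≤ n) (a : ℝ) (ha : 0 < a)
    (u : E n → ℝ) (f : ℝ → ℝ) (hrad : ∀ x : E n, u x = f ‖x‖)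
    (hdiff : ContDiff ℝ 1 u) (hzero : ∀ x : E n, 1 ≤ ‖x‖ → u x = 0) :
    -- T_a u is again radial and vanishes on (and outside of) the boundary of B₁
    ((∃ g : ℝ → ℝ, ∀ x : E n, Ta n a f x = g ‖x‖) ∧
      (∀ x : E n, 1 ≤ ‖x‖ → Ta n a f x = 0)) ∧
    -- T_{1/a} is the inverse of T_a
    (∀ x : E n, Ta n (1 / a)
        (fun t => a ^ (((n : ℝ) - 1) / (n : ℝ)) * f (t ^ (1 / a))) x = u x) ∧
    -- the n-Dirichlet energy is preserved
    (∫ x in ball (0 : E n) 1, ‖gradient (Ta n a f) x‖ ^ (n : ℝ)) =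
      ∫ x in ball (0 : E n) 1, ‖gradient u x‖ ^ (n : ℝ) := by
  set p : ℝ := ((n : ℝ) - 1) / (n : ℝ) with hp
  set e : E n := EuclideanSpace.single (⟨0, by omega⟩ : Fin n) (1 : ℝ) with he
  have hne : ‖e‖ = 1 := by simp [he]
  have hre : ∀ r : ℝ, ‖r • e‖ = |r| := by
    intro r; rw [norm_smul, hne, mul_one, Real.norm_eq_abs]
  have hf : ∀ r : ℝ, 0 ≤ r → f r = u (r • e) := by
    intro r hr
    rw [hrad (r • e), hre, abs_of_nonneg hr]
  have hfzero : ∀ r : ℝ, 1 ≤ r → f r = 0 := by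
    intro r hr
    rw [hf r (by linarith)]
    exact hzero _ (by rw [hre, abs_of_nonneg (by linarith)]; exact hr)
  refine ⟨⟨⟨fun r => a ^ p * f (r ^ (1 / a)), fun x => rfl⟩, ?_⟩, ?_, ?_⟩
  · intro x hx
    have : (1:ℝ) ≤ ‖x‖ ^ (1 / a) := Real.one_le_rpow hx (by positivity)
    rw [Ta, hfzero _ this, mul_zero]
  · intro x
    rw [Ta]
    rw [one_div_one_div, ← Real.rpow_mul (norm_nonneg x), mul_one_div_cancel ha.ne',
      Real.rpow_one, ← mul_assoc, ← Real.mul_rpow (by positivity) ha.le,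
      one_div_mul_cancel ha.ne', Real.one_rpow, one_mul, ← hrad]
  · -- part 3 : energy preservation
    have hn0 : (n : ℝ) ≠ 0 := Nat.cast_ne_zero.mpr (by omega)
    haveI : Nontrivial (E n) := ⟨e, 0, by intro h; rw [h] at hne; simp at hne⟩
    set φ : ℝ → ℝ := fun r => u (r • e) with hφdef
    have hφC : ContDiff ℝ 1 φ := hdiff.comp (contDiff_id.smul contDiff_const)
    set φ' : ℝ → ℝ := deriv φ with hφ'def
    have hφ' : ∀ r : ℝ, HasDerivAt φ (φ' r) r := fun r =>
      ((hφC.differentiable one_ne_zero) r).hasDerivAt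
    have hφ'zero : ∀ t : ℝ, 1 < t → φ' t = 0 := by
      intro t ht
      have hev : φ =ᶠ[𝓝 t] fun _ => 0 := by
        have hmem : {s : ℝ | 1 < s} ∈ 𝓝 t :=
          (isOpen_lt continuous_const continuous_id).mem_nhds ht
        filter_upwards [hmem] with s hs
        have hs' : (1:ℝ) < s := hs
        exact hzero _ (by rw [hre, abs_of_nonneg (by linarith)]; linarith)
      rw [hφ'def, hev.deriv_eq, deriv_const]
    have huφ : u = fun x : E n => φ ‖x‖ := funext fun x => by
      rw [hrad, hf _ (norm_nonneg x)]
    set ψ : ℝ → ℝ := fun r => a ^ p * φ (r ^ (1 / a)) with hψdef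
    have hTaψ : Ta n a f = fun x : E n => ψ ‖x‖ := funext fun x => by
      rw [Ta, hψdef, hf _ (Real.rpow_nonneg (norm_nonneg x) _)]
    set ψ' : ℝ → ℝ := fun r => a ^ p * (φ' (r ^ (1 / a)) * (1 / a * r ^ (1 / a - 1))) with hψ'def
    have hψ'at : ∀ r : ℝ, 0 < r → HasDerivAt ψ (ψ' r) r := by
      intro r hr
      have h1 : HasDerivAt (fun s : ℝ => s ^ (1 / a)) (1 / a * r ^ (1 / a - 1)) r :=
        Real.hasDerivAt_rpow_const (Or.inl hr.ne')
      have h2 := (hφ' (r ^ (1 / a))).comp r h1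
      simpa [hψdef, hψ'def, Function.comp_def] using h2.const_mul (a ^ p)
    set Fu : ℝ → ℝ := fun r => |φ' r| ^ (n : ℝ) with hFu
    set Fv : ℝ → ℝ := fun r => |ψ' r| ^ (n : ℝ) with hFv
    have key : ∀ (w : E n → ℝ) (F : ℝ → ℝ),
        (∀ x : E n, x ≠ 0 → ‖gradient w x‖ ^ (n : ℝ) = F ‖x‖) →
        (∀ r : ℝ, 1 < r → F r = 0) →
        (∫ x in ball (0 : E n) 1, ‖gradient w x‖ ^ (n : ℝ)) =
          n • (volume (ball (0 : E n) 1)).toReal • ∫ y in Ioi (0 : ℝ), y ^ (n - 1) • F y := by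
      intro w F hgrad hF0
      rw [← integral_indicator measurableSet_ball]
      have h2 : (ball (0 : E n) 1).indicator (fun x => ‖gradient w x‖ ^ (n : ℝ)) =ᵐ[volume]
          fun x => F ‖x‖ := by
        have h0 : ∀ᵐ x : E n, x ≠ 0 := by
          have hset : {x : E n | ¬x ≠ 0} = {0} := by ext x; simp
          rw [ae_iff, hset]; exact measure_singleton 0
        have hs : ∀ᵐ x : E n, ‖x‖ ≠ 1 := by
          have hset : {x : E n | ¬‖x‖ ≠ 1} = sphere 0 1 := by
            ext x; simp [mem_sphere_zero_iff_norm]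
          rw [ae_iff, hset]; exact Measure.addHaar_sphere volume 0 1
        filter_upwards [h0, hs] with x hx0 hx1
        rcases lt_or_gt_of_ne hx1 with h | h
        · rw [indicator_of_mem (mem_ball_zero_iff.mpr h), hgrad x hx0]
        · rw [indicator_of_notMem (fun hm => absurd (mem_ball_zero_iff.mp hm) (by linarith)),
            hF0 _ h]
      rw [integral_congr_ae h2]
      have h3 := integral_fun_norm_addHaar (volume : Measure (E n)) F
      rwa [finrank_euclideanSpace_fin] at h3
    have hugrad : ∀ x : E n, x ≠ 0 → ‖gradient u x‖ ^ (n : ℝ) = Fu ‖x‖ := by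
      intro x hx
      rw [huφ, norm_gradient_radial hx (hφ' ‖x‖)]
    have hvgrad : ∀ x : E n, x ≠ 0 → ‖gradient (Ta n a f) x‖ ^ (n : ℝ) = Fv ‖x‖ := by
      intro x hx
      rw [hTaψ, norm_gradient_radial hx (hψ'at ‖x‖ (norm_pos_iff.mpr hx))]
    have hFu0 : ∀ r : ℝ, 1 < r → Fu r = 0 := by
      intro r hr
      rw [hFu]; simp [hφ'zero r hr, Real.zero_rpow hn0]
    have hFv0 : ∀ r : ℝ, 1 < r → Fv r = 0 := by
      intro r hr
      have h1 : (1 : ℝ) < r ^ (1 / a) :=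
        (Real.one_lt_rpow_iff_of_pos (by linarith)).mpr (Or.inl ⟨hr, by positivity⟩)
      have h2 : ψ' r = 0 := by
        have h3 : φ' (r ^ (1 / a)) = 0 := hφ'zero _ h1
        show a ^ p * (φ' (r ^ (1 / a)) * (1 / a * r ^ (1 / a - 1))) = 0
        rw [h3, zero_mul, mul_zero]
      rw [hFv]; simp [h2, Real.zero_rpow hn0]
    rw [key _ Fv hvgrad hFv0, key u Fu hugrad hFu0]
    refine congrArg _ (congrArg _ ?_)
    rw [← integral_comp_rpow_Ioi (fun y => y ^ (n - 1) • Fv y) ha.ne']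
    refine setIntegral_congr_fun measurableSet_Ioi fun x hx => ?_
    have hx : (0 : ℝ) < x := hx
    have hxa : (0 : ℝ) < x ^ a := Real.rpow_pos_of_pos hx a
    have k1 : (x ^ a) ^ (1 / a) = x := by
      rw [← Real.rpow_mul hx.le, mul_one_div_cancel ha.ne', Real.rpow_one]
    have k2 : (x ^ a) ^ (1 / a - 1) = x ^ (1 - a) := by
      rw [← Real.rpow_mul hx.le]; congr 1; field_simp
    have hpn : (p - 1) * (n : ℝ) = -1 := by rw [hp]; field_simp; ring
    have kC : (a ^ p * (1 / a * x ^ (1 - a))) ^ (n : ℝ)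
        = a⁻¹ * x ^ ((1 - a) * (n : ℝ)) := by
      have h1 : a ^ p * (1 / a * x ^ (1 - a)) = a ^ (p - 1) * x ^ (1 - a) := by
        rw [Real.rpow_sub ha, Real.rpow_one]; ring
      rw [h1, Real.mul_rpow (by positivity) (by positivity),
        ← Real.rpow_mul ha.le, ← Real.rpow_mul hx.le, hpn, Real.rpow_neg_one]
    have kFv : Fv (x ^ a) = a⁻¹ * x ^ ((1 - a) * (n : ℝ)) * |φ' x| ^ (n : ℝ) := by
      rw [hFv]
      simp only [hψ'def]
      rw [k1, k2]
      have habs : |a ^ p * (φ' x * (1 / a * x ^ (1 - a)))|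
          = a ^ p * (1 / a * x ^ (1 - a)) * |φ' x| := by
        rw [abs_mul, abs_mul, abs_mul, abs_of_nonneg (Real.rpow_nonneg ha.le _),
          abs_of_nonneg (by positivity : (0:ℝ) ≤ 1 / a),
          abs_of_nonneg (Real.rpow_nonneg hx.le _)]
        ring
      rw [habs, Real.mul_rpow (by positivity) (abs_nonneg _), kC]
    have k4 : (x ^ a) ^ (n - 1 : ℕ) = x ^ (a * ((n : ℝ) - 1)) := by
      rw [← Real.rpow_natCast (x ^ a) (n - 1), ← Real.rpow_mul hx.le]
      congr 1
      rw [Nat.cast_sub (by omega), Nat.cast_one]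
    have k5 : x ^ (n - 1 : ℕ) = x ^ ((n : ℝ) - 1) := by
      rw [← Real.rpow_natCast x (n - 1), Nat.cast_sub (by omega), Nat.cast_one]
    have k6 : x ^ (a - 1) * x ^ (a * ((n : ℝ) - 1)) * x ^ ((1 - a) * (n : ℝ))
        = x ^ ((n : ℝ) - 1) := by
      rw [← Real.rpow_add hx, ← Real.rpow_add hx]; congr 1; ring
    rw [smul_eq_mul, smul_eq_mul, smul_eq_mul, kFv, k4, k5, hFu, abs_of_pos ha]
    calc a * x ^ (a - 1) * (x ^ (a * ((n : ℝ) - 1)) *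
          (a⁻¹ * x ^ ((1 - a) * (n : ℝ)) * |φ' x| ^ (n : ℝ)))
        = (a * a⁻¹) * (x ^ (a - 1) * x ^ (a * ((n : ℝ) - 1)) * x ^ ((1 - a) * (n : ℝ)))
            * |φ' x| ^ (n : ℝ) := by ring
      _ = x ^ ((n : ℝ) - 1) * |φ' x| ^ (n : ℝ) := by
            rw [mul_inv_cancel₀ ha.ne', one_mul, k6]
end
end

section
/- Let n ≥ 2, β ∈ [0,n), a = 1 − β/n, and α > 0 with α/α_n + β/n = 1 where α_n = n·ω_{n-1}^{1/(n-1)}. Then for every u ∈ W^{1,n}_{0,rad}(B_1), F_{B_1}(u) = (1/a)·J_{B_1}(T_a u), where F_{B_1}(u) = ∫_{B_1} (e^{α|u|^{n/(n-1)}} − 1)/|x|^β dx, J_{B_1}(v) = ∫_{B_1} (e^{α_n|v|^{n/(n-1)}} − 1) dx, and (T_a u)(x) = a^{(n-1)/n} u(|x|^{1/a}). -/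
open MeasureTheory Metric Set Filter
open scoped RealInnerProductSpace ENNReal Topology NNReal

noncomputable section

/-- ω_{n-1}, the H^{n-1} measure of the unit sphere, equals n times the volume of the unit ball. -/
def sphereVol (n : ℕ) : ℝ := n * (volume (Metric.ball (0 : E n) 1)).toReal

/-!
In polar coordinates both integrals become integrals over `(0, 1)` of the radial profiles
against `r ^ (n - 1)`. The substitution `s = r ^ a` turns `s ^ (n - 1) ds` into
`a r ^ (a n - 1) dr = a r ^ (n - 1 - β) dr`, producing the weight `|x| ^ (-β)` and the factor `a`,
while the factor `a ^ ((n - 1) / n)` of `T_a` becomes `a` under `|·| ^ (n / (n - 1))`, so that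
`α_n a = α` in the exponent.
-/

theorem setIntegral_ball_fun_norm_addHaar {E F : Type*} [NormedAddCommGroup E] [NormedSpace ℝ E]
    [MeasurableSpace E] [BorelSpace E] [FiniteDimensional ℝ E] [Nontrivial E]
    [NormedAddCommGroup F] [NormedSpace ℝ F]
    (μ : Measure E) [μ.IsAddHaarMeasure] (f : ℝ → F) (r : ℝ) :
    ∫ x in ball (0 : E) r, f ‖x‖ ∂μ =
      Module.finrank ℝ E • μ.real (ball 0 1) •
        ∫ y in Ioo 0 r, y ^ (Module.finrank ℝ E - 1) • f y := by
  have hind :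
      (ball (0 : E) r).indicator (fun x => f ‖x‖) = fun x => (Iio r).indicator f ‖x‖ := by
    ext x; simp [indicator]
  rw [← integral_indicator measurableSet_ball, hind, integral_fun_norm_addHaar,
    ← Ioi_inter_Iio, ← setIntegral_indicator measurableSet_Iio]
  simp_rw [indicator_smul_apply]

theorem Real.abs_rpow_inv_mul_rpow {a p : ℝ} (ha : 0 ≤ a) (hp : p ≠ 0) (t : ℝ) :
    |a ^ p⁻¹ * t| ^ p = a * |t| ^ p := by
  rw [abs_mul, abs_of_nonneg (Real.rpow_nonneg ha _),
    Real.mul_rpow (Real.rpow_nonneg ha _) (abs_nonneg _), Real.rpow_inv_rpow ha hp]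

theorem integral_Ioo_zero_one_rpow_mul_comp_rpow {a : ℝ} (ha : 0 < a) (m : ℝ) (φ : ℝ → ℝ) :
    ∫ s in Ioo 0 1, s ^ m * φ (s ^ (1 / a)) =
      a * ∫ r in Ioo 0 1, r ^ (a * (m + 1) - 1) * φ r := by
  rw [← integral_const_mul, ← Ioi_inter_Iio, ← setIntegral_indicator measurableSet_Iio,
    ← setIntegral_indicator measurableSet_Iio, ← integral_comp_rpow_Ioi_of_pos ha]
  refine setIntegral_congr_fun measurableSet_Ioi fun r (hr : 0 < r) => ?_
  by_cases hr1 : r < 1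
  · have hra : r ^ a < 1 := (Real.rpow_lt_one_iff' hr.le ha).2 hr1
    have hinv : (r ^ a) ^ (1 / a) = r := by
      rw [← Real.rpow_mul hr.le, mul_one_div_cancel ha.ne', Real.rpow_one]
    simp only [indicator_of_mem (show r ^ a ∈ Iio 1 from hra),
      indicator_of_mem (show r ∈ Iio 1 from hr1), hinv, smul_eq_mul, ← Real.rpow_mul hr.le]
    rw [show a * (m + 1) - 1 = (a - 1) + a * m by ring, Real.rpow_add hr]
    ring
  · have hra : ¬ r ^ a < 1 := fun h => hr1 ((Real.rpow_lt_one_iff' hr.le ha).1 h)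
    simp [indicator_of_notMem (show r ^ a ∉ Iio 1 from hra),
      indicator_of_notMem (show r ∉ Iio 1 from hr1)]

theorem integral_Ioo_zero_one_pow_mul_comp_rpow {a β : ℝ} (ha : 0 < a) (k : ℕ)
    (hβ : a * (k + 1) = k + 1 - β) (φ : ℝ → ℝ) :
    ∫ s in Ioo 0 1, s ^ k * φ (s ^ (1 / a)) = a * ∫ r in Ioo 0 1, r ^ k * (φ r / r ^ β) := by
  simp_rw [← Real.rpow_natCast, integral_Ioo_zero_one_rpow_mul_comp_rpow ha, hβ]
  congr 1
  refine setIntegral_congr_fun measurableSet_Ioo fun r hr => ?_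
  rw [add_sub_right_comm, add_sub_cancel_right, Real.rpow_sub hr.1]
  ring

theorem sphereVol_pos (n : ℕ) [NeZero n] : 0 < sphereVol n := by
  have : 0 < (volume (ball (0 : E n) 1)).toReal :=
    ENNReal.toReal_pos (measure_ball_pos _ _ one_pos).ne' measure_ball_lt_top.ne
  exact mul_pos (Nat.cast_pos.2 (Nat.pos_of_neZero n)) this

theorem setIntegral_ball_zero_one_fun_norm (n : ℕ) [NeZero n] (g : ℝ → ℝ) :
    ∫ x in ball (0 : E n) 1, g ‖x‖ = sphereVol n * ∫ r in Ioo 0 1, r ^ (n - 1) * g r := by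
  rw [setIntegral_ball_fun_norm_addHaar, finrank_euclideanSpace_fin, sphereVol, nsmul_eq_mul,
    smul_eq_mul, ← mul_assoc, measureReal_def]
  rfl

theorem stmt2_general (n : ℕ) (hn : 2 ≤ n) (α β a : ℝ) (hβn : β < n)
    (ha : a = 1 - β / n)
    (hsum : α / ((n : ℝ) * sphereVol n ^ (1 / ((n : ℝ) - 1))) + β / (n : ℝ) = 1)
    (u : E n → ℝ) (f : ℝ → ℝ) (hrad : ∀ x : E n, u x = f ‖x‖) :
    (∫ x in ball (0 : E n) 1,
        (Real.exp (α * |u x| ^ ((n : ℝ) / ((n : ℝ) - 1))) - 1) / ‖x‖ ^ β) =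
      (1 / a) * ∫ x in ball (0 : E n) 1,
        (Real.exp ((n : ℝ) * sphereVol n ^ (1 / ((n : ℝ) - 1)) *
          |Ta n a f x| ^ ((n : ℝ) / ((n : ℝ) - 1))) - 1) := by
  have hn1 : (1 : ℝ) < n := by exact_mod_cast hn
  have : NeZero n := ⟨by omega⟩
  set p : ℝ := n / (n - 1)
  set αn : ℝ := n * sphereVol n ^ (1 / ((n : ℝ) - 1))
  have ha0 : 0 < a := by rw [ha, sub_pos, div_lt_one (by linarith)]; exact hβn
  have hαn : 0 < αn := mul_pos (by linarith) (Real.rpow_pos_of_pos (sphereVol_pos n) _)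
  have hααn : α = αn * a := by
    rw [ha, ← hsum]; field_simp; ring
  have hweight : a * (((n - 1 : ℕ) : ℝ) + 1) = ((n - 1 : ℕ) : ℝ) + 1 - β := by
    rw [Nat.cast_sub (by omega), ha]; field_simp; ring
  set ψ : ℝ → ℝ := fun r => Real.exp (α * |f r| ^ p) - 1
  have hTa : ∀ x : E n, Real.exp (αn * |Ta n a f x| ^ p) - 1 = ψ (‖x‖ ^ (1 / a)) := by
    intro x
    rw [Ta, ← inv_div, Real.abs_rpow_inv_mul_rpow ha0.le (by positivity), ← mul_assoc, ← hααn]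
  simp_rw [hrad, hTa]
  rw [setIntegral_ball_zero_one_fun_norm n (fun r => ψ r / r ^ β),
    setIntegral_ball_zero_one_fun_norm n (fun r => ψ (r ^ (1 / a))),
    integral_Ioo_zero_one_pow_mul_comp_rpow ha0 _ hweight]
  field_simp

/-- With a = 1 − β/n and α/α_n + β/n = 1,
F_{B₁}(u) = (1/a)·J_{B₁}(T_a u) for every radial u ∈ W^{1,n}_{0,rad}(B₁). -/
theorem stmt2 (n : ℕ) (hn : 2 ≤ n) (α β a : ℝ) (hα : 0 < α) (hβ0 : 0 ≤ β) (hβn : β < n)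
    (ha : a = 1 - β / n)
    (hsum : α / ((n : ℝ) * sphereVol n ^ (1 / ((n : ℝ) - 1))) + β / (n : ℝ) = 1)
    (u : E n → ℝ) (f : ℝ → ℝ) (hrad : ∀ x : E n, u x = f ‖x‖)
    (hdiff : ContDiff ℝ 1 u) (hzero : ∀ x : E n, 1 ≤ ‖x‖ → u x = 0) :
    (∫ x in ball (0 : E n) 1,
        (Real.exp (α * |u x| ^ ((n : ℝ) / ((n : ℝ) - 1))) - 1) / ‖x‖ ^ β) =
      (1 / a) * ∫ x in ball (0 : E n) 1,
        (Real.exp ((n : ℝ) * sphereVol n ^ (1 / ((n : ℝ) - 1)) *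
          |Ta n a f x| ^ ((n : ℝ) / ((n : ℝ) - 1))) - 1) :=
  stmt2_general n hn α β a hβn ha hsum u f hrad
end
end

section
/- Let Ω ⊂ ℝ^n be bounded, smooth, with 0 ∈ Ω, and let G_{Ω,0}(y) = −ω_{n-1}^{−1/(n-1)} log|y| − H(y) be the n-Green's function with H continuous on the closure of Ω. Let I_Ω(0) = e^{−ω_{n-1}^{1/(n-1)} H(0)} be the conformal incenter. Then lim_{t→∞} n·|{G_{Ω,0} > t}| / (ω_{n-1} e^{−n ω_{n-1}^{1/(n-1)} t}) = I_Ω(0)^n. -/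
open MeasureTheory Metric Set Filter
open scoped RealInnerProductSpace ENNReal Topology NNReal

noncomputable section

/-- `G` is the n-Green's function of `Ω` with singularity at `x`: it vanishes on the boundary,
is nonnegative, and satisfies ∫_Ω |∇G|^{n-2}⟨∇G,∇φ⟩ = φ(x) for all test functions φ. -/
def IsGreen (n : ℕ) (Ω : Set (E n)) (x : E n) (G : E n → ℝ) : Prop :=
  (∀ y ∈ frontier Ω, G y = 0) ∧ (∀ y ∈ Ω, 0 ≤ G y) ∧
    ∀ φ : E n → ℝ, ContDiff ℝ 1 φ → tsupport φ ⊆ Ω →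
      (∫ y in Ω, ‖gradient G y‖ ^ ((n : ℝ) - 2) * ⟪gradient G y, gradient φ y⟫) = φ x

/-!
Near the pole, `G y = -c⁻¹ log ‖y‖ - H y` with `c = ω_{n-1}^{1/(n-1)}`, so `G y > t` exactly when
`‖y‖ < exp (-c (t + H y))`. As `H` is bounded below, `{G > t}` shrinks to `0`; as `H` is continuous there, for every
`ε > 0` and large `t` the set `{G > t}` lies between the punctured ball of radius
`exp (-c (t + H 0 + ε))` and the ball of radius `exp (-c (t + H 0 - ε))`. Their volumes, divided by
`|B₁| e^{-nct}`, are `e^{-nc(H 0 ± ε)}`, and letting `ε → 0` gives the limit `I_Ω(0)^n = e^{-nc H 0}`.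
-/

theorem tendsto_of_forall_eventually_mem_uIcc {α : Type*} {l : Filter α} {f : α → ℝ}
    {φ : ℝ → ℝ} {a : ℝ} (hφ : ContinuousAt φ a)
    (h : ∀ ε > 0, ∀ᶠ x in l, f x ∈ uIcc (φ (a - ε)) (φ (a + ε))) :
    Tendsto f l (𝓝 (φ a)) := by
  have hnear : ∀ s ∈ 𝓝 (φ a), ∃ ε > 0, φ (a - ε) ∈ s ∧ φ (a + ε) ∈ s := by
    intro s hs
    obtain ⟨δ, hδ, hball⟩ := Metric.mem_nhds_iff.1 (hφ hs)
    refine ⟨δ / 2, half_pos hδ, hball ?_, hball ?_⟩ <;>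
      simp [abs_of_pos hδ, hδ]
  refine tendsto_order.2 ⟨fun b hb => ?_, fun b hb => ?_⟩
  · obtain ⟨ε, hε, h₁, h₂⟩ := hnear _ (Ioi_mem_nhds hb)
    filter_upwards [h ε hε] with x hx
    exact (lt_min h₁ h₂).trans_le hx.1
  · obtain ⟨ε, hε, h₁, h₂⟩ := hnear _ (Iio_mem_nhds hb)
    filter_upwards [h ε hε] with x hx
    exact hx.2.trans_lt (max_lt h₁ h₂)

theorem lt_neg_inv_mul_log_sub_iff {c x t h : ℝ} (hc : 0 < c) (hx : 0 < x) :
    t < -c⁻¹ * Real.log x - h ↔ x < Real.exp (-c * (t + h)) := by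
  rw [← Real.log_lt_iff_lt_exp hx]
  calc t < -c⁻¹ * Real.log x - h ↔ t + h < c⁻¹ * -Real.log x := by
        constructor <;> intro <;> linarith
    _ ↔ c * (t + h) < -Real.log x := lt_inv_mul_iff₀ hc
    _ ↔ Real.log x < -c * (t + h) := by constructor <;> intro <;> linarith

section Superlevel

variable {F : Type*} [NormedAddCommGroup F] {Ω : Set F} {G H : F → ℝ} {c ε : ℝ}

theorem eventually_ball_exp_subset (hc : 0 < c) (a : ℝ) {S : Set F} (hS : S ∈ 𝓝 (0 : F)) :
    ∀ᶠ t in atTop, ball (0 : F) (Real.exp (-c * (t + a))) ⊆ S := by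
  obtain ⟨δ, hδ, hδS⟩ := Metric.mem_nhds_iff.1 hS
  have hlim : Tendsto (fun t => Real.exp (-c * (t + a))) atTop (𝓝 0) :=
    Real.tendsto_exp_atBot.comp <|
      (tendsto_atTop_add_const_right _ a tendsto_id).const_mul_atTop_of_neg (neg_neg_of_pos hc)
  filter_upwards [hlim.eventually (eventually_lt_nhds hδ)] with t ht
  exact (ball_subset_ball ht.le).trans hδS

theorem eventually_superlevel_subset_ball (hc : 0 < c)
    (hG : ∀ y ∈ Ω, y ≠ 0 → G y = -c⁻¹ * Real.log ‖y‖ - H y)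
    (hbdd : BddBelow (H '' Ω)) (hH : ContinuousAt H 0) (hε : 0 < ε) :
    ∀ᶠ t in atTop, {y ∈ Ω | t < G y} ⊆ ball 0 (Real.exp (-c * (t + (H 0 - ε)))) := by
  obtain ⟨m, hm⟩ := hbdd
  filter_upwards [eventually_ball_exp_subset hc m
    (hH.eventually (lt_mem_nhds (sub_lt_self _ hε)))] with t ht
  rintro y ⟨hyΩ, hyG⟩
  rw [mem_ball_zero_iff]
  rcases eq_or_ne y 0 with rfl | hy0
  · simpa using Real.exp_pos _
  have hy : ‖y‖ < Real.exp (-c * (t + H y)) :=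
    (lt_neg_inv_mul_log_sub_iff hc (norm_pos_iff.2 hy0)).1 (hG y hyΩ hy0 ▸ hyG)
  have hmy : m ≤ H y := hm (mem_image_of_mem H hyΩ)
  have hHy : H 0 - ε < H y :=
    ht (mem_ball_zero_iff.2 (hy.trans_le (Real.exp_le_exp.2 (by nlinarith))))
  exact hy.trans (Real.exp_lt_exp.2 (by nlinarith))

theorem eventually_ball_diff_subset_superlevel (hc : 0 < c) (hΩ : Ω ∈ 𝓝 (0 : F))
    (hG : ∀ y ∈ Ω, y ≠ 0 → G y = -c⁻¹ * Real.log ‖y‖ - H y)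
    (hH : ContinuousAt H 0) (hε : 0 < ε) :
    ∀ᶠ t in atTop, ball 0 (Real.exp (-c * (t + (H 0 + ε)))) \ {0} ⊆ {y ∈ Ω | t < G y} := by
  filter_upwards [eventually_ball_exp_subset hc (H 0 + ε)
    (inter_mem hΩ (hH.eventually (gt_mem_nhds (lt_add_of_pos_right _ hε))))] with t ht
  rintro y ⟨hy, hy0 : y ≠ 0⟩
  obtain ⟨hyΩ, hHy : H y < H 0 + ε⟩ := ht hy
  refine ⟨hyΩ, (hG y hyΩ hy0).symm ▸ (lt_neg_inv_mul_log_sub_iff hc (norm_pos_iff.2 hy0)).2 ?_⟩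
  rw [mem_ball_zero_iff] at hy
  exact hy.trans (Real.exp_lt_exp.2 (by nlinarith))

end Superlevel

section Volume

variable {F : Type*} [NormedAddCommGroup F] [NormedSpace ℝ F] [FiniteDimensional ℝ F]
  [Nontrivial F] [MeasurableSpace F] [BorelSpace F] (μ : Measure F) [μ.IsAddHaarMeasure]

theorem measure_ball_exp_toReal_div (c t a : ℝ) :
    (μ (ball (0 : F) (Real.exp (-c * (t + a))))).toReal /
        ((μ (ball (0 : F) 1)).toReal * Real.exp (-(Module.finrank ℝ F : ℝ) * c * t)) =
      Real.exp (-(Module.finrank ℝ F : ℝ) * c * a) := by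
  have hB : 0 < (μ (ball (0 : F) 1)).toReal :=
    ENNReal.toReal_pos (measure_ball_pos μ 0 one_pos).ne' measure_ball_lt_top.ne
  have hexp : Real.exp (Module.finrank ℝ F * (-c * (t + a))) =
      Real.exp (-(Module.finrank ℝ F : ℝ) * c * a) *
        Real.exp (-(Module.finrank ℝ F : ℝ) * c * t) := by
    rw [← Real.exp_add]; ring_nf
  rw [Measure.addHaar_ball μ 0 (Real.exp_pos _).le, ENNReal.toReal_mul,
    ENNReal.toReal_ofReal (by positivity), ← Real.exp_nat_mul, hexp]
  field_simp

theorem eventually_measure_superlevel_div_mem_Icc {Ω : Set F} {G H : F → ℝ} {c ε : ℝ}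
    (hc : 0 < c) (hΩ : Ω ∈ 𝓝 (0 : F))
    (hG : ∀ y ∈ Ω, y ≠ 0 → G y = -c⁻¹ * Real.log ‖y‖ - H y)
    (hbdd : BddBelow (H '' Ω)) (hH : ContinuousAt H 0) (hε : 0 < ε) :
    ∀ᶠ t in atTop, (μ {y ∈ Ω | t < G y}).toReal /
        ((μ (ball (0 : F) 1)).toReal * Real.exp (-(Module.finrank ℝ F : ℝ) * c * t)) ∈
      Icc (Real.exp (-(Module.finrank ℝ F : ℝ) * c * (H 0 + ε)))
        (Real.exp (-(Module.finrank ℝ F : ℝ) * c * (H 0 - ε))) := by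
  filter_upwards [eventually_ball_diff_subset_superlevel hc hΩ hG hH hε,
    eventually_superlevel_subset_ball hc hG hbdd hH hε] with t hlow hup
  rw [← measure_ball_exp_toReal_div μ c t (H 0 + ε), ← measure_ball_exp_toReal_div μ c t (H 0 - ε)]
  have hB : 0 ≤ (μ (ball (0 : F) 1)).toReal * Real.exp (-(Module.finrank ℝ F : ℝ) * c * t) := by
    positivity
  constructor
  · refine div_le_div_of_nonneg_right (ENNReal.toReal_mono ?_ ?_) hB
    · exact ((measure_mono hup).trans_lt measure_ball_lt_top).ne
    · exact (measure_sdiff_null (measure_singleton 0)).symm.trans_le (measure_mono hlow)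
  · exact div_le_div_of_nonneg_right
      (ENNReal.toReal_mono measure_ball_lt_top.ne (measure_mono hup)) hB

end Volume

theorem stmt6_general (n : ℕ) (hn : 2 ≤ n) (Ω : Set (E n)) (hΩ : IsOpen Ω)
    (hb : Bornology.IsBounded Ω) (h0 : (0 : E n) ∈ Ω)
    (G H : E n → ℝ)
    (hH : ContinuousOn H (closure Ω))
    (hdec : ∀ y ∈ Ω, y ≠ 0 →
      G y = -(sphereVol n ^ (1 / ((n : ℝ) - 1)))⁻¹ * Real.log ‖y‖ - H y) :
    Tendsto (fun t : ℝ => (n : ℝ) * (volume {y ∈ Ω | t < G y}).toReal /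
        (sphereVol n * Real.exp (-(n : ℝ) * sphereVol n ^ (1 / ((n : ℝ) - 1)) * t))) atTop
      (𝓝 (Real.exp (-(sphereVol n ^ (1 / ((n : ℝ) - 1))) * H 0) ^ (n : ℝ))) := by
  have hn0 : (n : ℝ) ≠ 0 := by norm_cast; omega
  have : Nontrivial (E n) :=
    Module.nontrivial_of_finrank_pos (R := ℝ) (by rw [finrank_euclideanSpace_fin]; omega)
  set c := sphereVol n ^ (1 / ((n : ℝ) - 1))
  have hc : 0 < c := Real.rpow_pos_of_pos (mul_pos (by positivity)
    (ENNReal.toReal_pos (measure_ball_pos volume 0 one_pos).ne' measure_ball_lt_top.ne)) _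
  have hΩ0 : Ω ∈ 𝓝 0 := hΩ.mem_nhds h0
  have hH0 : ContinuousAt H 0 := hH.continuousAt (mem_of_superset hΩ0 subset_closure)
  have hbdd : BddBelow (H '' Ω) :=
    (hb.isCompact_closure.bddBelow_image hH).mono (image_mono subset_closure)
  rw [Real.rpow_natCast, ← Real.exp_nat_mul, show (n : ℝ) * (-c * H 0) = -n * c * H 0 by ring]
  refine tendsto_of_forall_eventually_mem_uIcc (φ := fun s => Real.exp (-n * c * s))
    (by fun_prop) fun ε hε => ?_
  filter_upwards [eventually_measure_superlevel_div_mem_Icc volume hc hΩ0 hdec hbdd hH0 hε]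
    with t ht
  rw [finrank_euclideanSpace_fin] at ht
  convert Icc_subset_uIcc' ht using 1
  rw [sphereVol, mul_assoc (n : ℝ), mul_div_mul_left _ _ hn0]

/-- Asymptotics of the superlevel sets of the n-Green's function:
n·|{G > t}| / (ω_{n-1} e^{-n ω^{1/(n-1)} t}) → I_Ω(0)^n as t → ∞, where
I_Ω(0) = e^{-ω^{1/(n-1)} H(0)} is the conformal incenter. -/
theorem stmt6 (n : ℕ) (hn : 2 ≤ n) (Ω : Set (E n)) (hΩ : IsOpen Ω)
    (hb : Bornology.IsBounded Ω) (h0 : (0 : E n) ∈ Ω)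
    (G H : E n → ℝ) (hG : IsGreen n Ω 0 G)
    (hH : ContinuousOn H (closure Ω))
    (hdec : ∀ y ∈ Ω, y ≠ 0 →
      G y = -(sphereVol n ^ (1 / ((n : ℝ) - 1)))⁻¹ * Real.log ‖y‖ - H y) :
    Tendsto (fun t : ℝ => (n : ℝ) * (volume {y ∈ Ω | t < G y}).toReal /
        (sphereVol n * Real.exp (-(n : ℝ) * sphereVol n ^ (1 / ((n : ℝ) - 1)) * t))) atTop
      (𝓝 (Real.exp (-(sphereVol n ^ (1 / ((n : ℝ) - 1))) * H 0) ^ (n : ℝ))) :=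
  stmt6_general n hn Ω hΩ hb h0 G H hH hdec
end
end
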